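/- arXiv:0903.2514 — 3 statements merged into one kernel-verified Lean document; each statement's English description precedes it below -/
import Mathlib

section
/- The infinite product over all integers n ≥ 2 of (1 - 1/n^3) equals cosh(π√3/2)/(3π). -/
/-!
With `n = j + 2`, factor `n ^ 3 - 1 = (n - 1) (n + 1/2 - i√3/2) (n + 1/2 + i√3/2)`, so that
`1 - 1/n^3 = ∏ᵢ (j + aᵢ)/(j + 2)` with `a = (1, 5/2 - i√3/2, 5/2 + i√3/2)`. Since `∑ aᵢ = 6`,
Euler's limit `Γ(s) = lim nˢ n! / (s (s+1) ⋯ (s+n))` makes the powers of `n` cancel and the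
partial products tend to `∏ᵢ Γ(2)/Γ(aᵢ) = 1 / (Γ(5/2 - i√3/2) Γ(5/2 + i√3/2))`. Two steps of
`Γ(s+1) = s Γ(s)` and the reflection formula `Γ(1/2 + z) Γ(1/2 - z) = π / cos(πz)` evaluate
this to `cosh(π√3/2) / (3π)`.
-/

open Real Filter Finset Topology

namespace Complex

theorem prod_cpow_eq_cpow_sum {ι : Type*} {x : ℂ} (hx : x ≠ 0) (s : Finset ι) (c : ι → ℂ) :
    ∏ i ∈ s, x ^ c i = x ^ ∑ i ∈ s, c i := by
  simp only [cpow_def_of_ne_zero hx, mul_sum, exp_sum]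

theorem prod_range_succ_add_div_add_eq {n : ℕ} (hn : n ≠ 0) (a b : ℂ) :
    ∏ j ∈ range (n + 1), (a + j) / (b + j) =
      (n : ℂ) ^ (a - b) * (GammaSeq b n / GammaSeq a n) := by
  have hn' : (n : ℂ) ≠ 0 := Nat.cast_ne_zero.mpr hn
  have hfac : (n.factorial : ℂ) ≠ 0 := Nat.cast_ne_zero.mpr n.factorial_ne_zero
  have hpow (s : ℂ) : (n : ℂ) ^ s ≠ 0 := cpow_ne_zero_iff.mpr (Or.inl hn')
  rw [prod_div_distrib, GammaSeq, GammaSeq, cpow_sub _ _ hn', div_div_div_eq]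
  field_simp [hpow a, hpow b]

theorem tendsto_prod_range_prod_div_of_sum_eq {ι : Type*} (s : Finset ι) (a b : ι → ℂ)
    (hab : ∑ i ∈ s, a i = ∑ i ∈ s, b i) (ha : ∀ i ∈ s, Gamma (a i) ≠ 0) :
    Tendsto (fun n : ℕ => ∏ j ∈ range n, ∏ i ∈ s, (a i + j) / (b i + j)) atTop
      (𝓝 (∏ i ∈ s, Gamma (b i) / Gamma (a i))) := by
  rw [← tendsto_add_atTop_iff_nat 1]
  have hlim := tendsto_finsetProd s fun i hi =>
    (GammaSeq_tendsto_Gamma (b i)).div (GammaSeq_tendsto_Gamma (a i)) (ha i hi)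
  refine hlim.congr' ?_
  filter_upwards [eventually_ne_atTop 0] with n hn
  rw [Finset.prod_comm]
  simp only [Pi.div_apply, prod_range_succ_add_div_add_eq hn, prod_mul_distrib,
    prod_cpow_eq_cpow_sum (Nat.cast_ne_zero.mpr hn), sum_sub_distrib, hab, sub_self, cpow_zero,
    one_mul]

theorem Gamma_one_half_add_mul_Gamma_one_half_sub (z : ℂ) :
    Gamma (1 / 2 + z) * Gamma (1 / 2 - z) = π / cos (π * z) := by
  rw [show (1 : ℂ) / 2 - z = 1 - (1 / 2 + z) by ring, Gamma_mul_Gamma_one_sub, mul_add,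
    show (π : ℂ) * (1 / 2) = π / 2 by ring, add_comm, sin_add_pi_div_two]

theorem Gamma_five_halves_sub_mul_Gamma_five_halves_add (y : ℝ) :
    Gamma (5 / 2 - y * I) * Gamma (5 / 2 + y * I) =
      (9 / 4 + y ^ 2) * (1 / 4 + y ^ 2) * π / Real.cosh (π * y) := by
  have ne_zero_of_re {w : ℂ} (h : w.re ≠ 0) : w ≠ 0 := fun hw => h (by simp [hw])
  have Gamma_add_two (w : ℂ) (h₀ : w.re ≠ 0) (h₁ : (w + 1).re ≠ 0) :
      Gamma (w + 2) = (w + 1) * w * Gamma w := by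
    rw [show w + 2 = w + 1 + 1 by ring, Gamma_add_one _ (ne_zero_of_re h₁),
      Gamma_add_one _ (ne_zero_of_re h₀), mul_assoc]
  rw [show (5 : ℂ) / 2 - y * I = (1 / 2 - y * I) + 2 by ring,
    show (5 : ℂ) / 2 + y * I = (1 / 2 + y * I) + 2 by ring,
    Gamma_add_two _ (by simp) (by simp; norm_num), Gamma_add_two _ (by simp) (by simp; norm_num)]
  have hreflect := Gamma_one_half_add_mul_Gamma_one_half_sub (y * I)
  rw [← mul_assoc, ← ofReal_mul, cos_mul_I, ← ofReal_cosh] at hreflect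
  have hpoly : (1 / 2 - y * I + 1) * (1 / 2 - y * I) * ((1 / 2 + y * I + 1) * (1 / 2 + y * I)) =
      (9 / 4 + y ^ 2) * (1 / 4 + y ^ 2) := by
    linear_combination (-(5 / 2) * y ^ 2 + y ^ 4 * (I ^ 2 - 1)) * I_sq
  linear_combination
    (1 / 2 - y * I + 1) * (1 / 2 - y * I) * ((1 / 2 + y * I + 1) * (1 / 2 + y * I)) * hreflect +
      π / Real.cosh (π * y) * hpoly

theorem tendsto_prod_range_one_sub_inv_add_two_pow_three {y : ℝ} (hy : y ^ 2 = 3 / 4) :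
    Tendsto (fun n : ℕ => ∏ j ∈ range n, (1 - 1 / ((j : ℂ) + 2) ^ 3)) atTop
      (𝓝 (1 / (Gamma (5 / 2 - y * I) * Gamma (5 / 2 + y * I)))) := by
  let a : Fin 3 → ℂ := ![1, 5 / 2 - y * I, 5 / 2 + y * I]
  have hlim := tendsto_prod_range_prod_div_of_sum_eq univ a (fun _ => 2)
    (by simp [a, Fin.sum_univ_three]; ring)
    (fun i _ => Gamma_ne_zero_of_re_pos (by fin_cases i <;> norm_num [a]))
  have hfactor (j : ℕ) : 1 - 1 / ((j : ℂ) + 2) ^ 3 = ∏ i, (a i + j) / (2 + j) := by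
    have hj : (j : ℂ) + 2 ≠ 0 := by norm_cast
    have hj' : 2 + (j : ℂ) ≠ 0 := by norm_cast; omega
    have hyC : (y : ℂ) ^ 2 = 3 / 4 := by rw [← ofReal_pow, hy]; push_cast; ring
    simp only [Fin.prod_univ_three, a, Matrix.cons_val]
    field_simp
    linear_combination ((j : ℂ) + 1) * ((j : ℂ) + 2) ^ 3 * (4 * (y : ℂ) ^ 2 * I_sq - 4 * hyC)
  have hval : ∏ i, Gamma 2 / Gamma (a i) =
      1 / (Gamma (5 / 2 - y * I) * Gamma (5 / 2 + y * I)) := by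
    simp [Fin.prod_univ_three, a, Gamma_one, Gamma_ofNat_eq_factorial]
  rw [← hval]
  exact hlim.congr fun n => prod_congr rfl fun j _ => (hfactor j).symm

end Complex

theorem Real.multipliable_one_sub_one_div_nat_add_pow (k : ℕ) {p : ℕ} (hp : 1 < p) :
    Multipliable fun n : ℕ => 1 - 1 / ((n : ℝ) + k) ^ p := by
  have hs : Summable fun n : ℕ => 1 / ((n : ℝ) + k) ^ p := by
    simpa using (summable_nat_add_iff k).mpr (Real.summable_one_div_nat_pow.mpr hp)
  simpa [sub_eq_add_neg] using Real.multipliable_one_add_of_summable hs.neg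

/-- `∏_{n ≥ 2} (1 - 1/n^3) = cosh(π√3/2)/(3π)`. -/
theorem prod_one_sub_inv_pow_three :
    ∏' n : ℕ, (1 - 1 / ((n : ℝ) + 2) ^ 3) = Real.cosh (π * Real.sqrt 3 / 2) / (3 * π) := by
  set y := √3 / 2
  have hy : y ^ 2 = 3 / 4 := by simp [y, div_pow]; norm_num
  have hmult : Multipliable fun n : ℕ => 1 - 1 / ((n : ℝ) + 2) ^ 3 := by
    simpa using Real.multipliable_one_sub_one_div_nat_add_pow 2 (by norm_num : 1 < 3)
  have hvalue : 1 / (Complex.Gamma (5 / 2 - y * Complex.I) * Complex.Gamma (5 / 2 + y * Complex.I))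
      = ((Real.cosh (π * y) / (3 * π) : ℝ) : ℂ) := by
    have hyC : (y : ℂ) ^ 2 = 3 / 4 := by rw [← Complex.ofReal_pow, hy]; push_cast; ring
    rw [Complex.Gamma_five_halves_sub_mul_Gamma_five_halves_add, hyC]
    push_cast
    field_simp
    norm_num
  rw [mul_div_assoc]
  refine tendsto_nhds_unique hmult.hasProd.tendsto_prod_nat (tendsto_ofReal_iff.mp ?_)
  rw [← hvalue]
  exact (Complex.tendsto_prod_range_one_sub_inv_add_two_pow_three hy).congr fun n => by
    push_cast; rfl
end

section
/- The infinite product over all integers n ≥ 2 of (1 - 1/(n(n+1))) equals -2 sin(πφ)/π, where φ = (1 + √5)/2. In particular it equals twice the product ∏_{n=2}^∞ (1 - 1/(n(n-1))). -/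
open Real

/-!
If `a² = a + 1`, then `n² + n - 1 = (n + a)(n + 1 - a)`, so `1 - 1/(n(n+1))` is `1 - a²/n²` times
`r(n+1)/r(n)` with `r(n) = 1 - a/n`. The partial products therefore telescope to partial Euler
products for `sin(πa)/(πa)` times a ratio tending to `1/(1 - a)`, which gives
`∏_{n≥2} (1 - 1/(n(n-1))) = sin(πa)/(πa(1 - a)) = -sin(πa)/π`. Shifting the index by one drops only
the factor `1 - 1/2`, which doubles the product.
-/

open Filter Topology Finset

theorem one_sub_div_mul_one_sub_one_div_add_one_mul {a x : ℝ} (ha : a ^ 2 = a + 1) (hx : x ≠ 0)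
    (hx1 : x + 1 ≠ 0) :
    (1 - a / x) * (1 - 1 / ((x + 1) * x)) = (1 - a ^ 2 / x ^ 2) * (1 - a / (x + 1)) := by
  field_simp
  linear_combination (x - a) * ha

theorem one_sub_mul_prod_range_one_sub_one_div_add_two_mul_add_one {a : ℝ} (ha : a ^ 2 = a + 1)
    (N : ℕ) :
    (1 - a) * ∏ k ∈ range N, (1 - 1 / (((k : ℝ) + 2) * ((k : ℝ) + 1))) =
      (∏ k ∈ range N, (1 - a ^ 2 / ((k : ℝ) + 1) ^ 2)) * (1 - a / ((N : ℝ) + 1)) := by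
  induction N with
  | zero => simp
  | succ N ih =>
    have hstep := one_sub_div_mul_one_sub_one_div_add_one_mul (x := (N : ℝ) + 1) ha
      (by positivity) (by positivity)
    rw [prod_range_succ, prod_range_succ, ← mul_assoc, ih]
    push_cast
    linear_combination (∏ k ∈ range N, (1 - a ^ 2 / ((k : ℝ) + 1) ^ 2)) * hstep

theorem summable_one_div_add_two_mul_add_one :
    Summable fun n : ℕ => 1 / (((n : ℝ) + 2) * ((n : ℝ) + 1)) := by
  have hsq : Summable fun n : ℕ => 1 / ((n : ℝ) + 1) ^ 2 := by
    simpa using (summable_nat_add_iff 1).mpr (summable_one_div_nat_pow.mpr one_lt_two)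
  refine hsq.of_nonneg_of_le (fun n => by positivity) fun n => ?_
  gcongr
  linarith

theorem tendsto_prod_range_one_sub_one_div_add_two_mul_add_one {a : ℝ} (ha : a ^ 2 = a + 1) :
    Tendsto (fun N => ∏ k ∈ range N, (1 - 1 / (((k : ℝ) + 2) * ((k : ℝ) + 1)))) atTop
      (𝓝 (-sin (π * a) / π)) := by
  have ha0 : a ≠ 0 := by rintro rfl; norm_num at ha
  have ha1 : 1 - a ≠ 0 := by
    intro h
    obtain rfl : a = 1 := by linarith
    norm_num at ha
  have heuler : Tendsto (fun N => ∏ k ∈ range N, (1 - a ^ 2 / ((k : ℝ) + 1) ^ 2)) atTop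
      (𝓝 (sin (π * a) / (π * a))) :=
    ((tendsto_euler_sin_prod a).div_const (π * a)).congr fun N => by field_simp [pi_ne_zero]
  have hratio : Tendsto (fun N : ℕ => 1 - a / ((N : ℝ) + 1)) atTop (𝓝 1) := by
    simpa [div_eq_mul_inv] using
      (tendsto_one_div_add_atTop_nhds_zero_nat.const_mul a).const_sub (1 : ℝ)
  have hlimit : sin (π * a) / (π * a) * 1 / (1 - a) = -sin (π * a) / π := by
    field_simp [pi_ne_zero]
    linear_combination -sin (π * a) * ha
  rw [← hlimit]
  refine ((heuler.mul hratio).div_const (1 - a)).congr fun N => ?_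
  rw [← one_sub_mul_prod_range_one_sub_one_div_add_two_mul_add_one ha N]
  field_simp

theorem multipliable_one_sub_of_summable {ι : Type*} {f : ι → ℝ} (hf : Summable f) :
    Multipliable fun i => 1 - f i := by
  simpa [sub_eq_add_neg] using Real.multipliable_one_add_of_summable hf.neg

theorem tprod_one_sub_one_div_add_two_mul_add_one {a : ℝ} (ha : a ^ 2 = a + 1) :
    ∏' n : ℕ, (1 - 1 / (((n : ℝ) + 2) * ((n : ℝ) + 1))) = -sin (π * a) / π :=
  tendsto_nhds_unique
    (multipliable_one_sub_of_summable summable_one_div_add_two_mul_add_one).tendsto_prod_tprod_nat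
    (tendsto_prod_range_one_sub_one_div_add_two_mul_add_one ha)

theorem tprod_one_sub_one_div_add_two_mul_add_three :
    ∏' n : ℕ, (1 - 1 / (((n : ℝ) + 2) * ((n : ℝ) + 3))) =
      2 * ∏' n : ℕ, (1 - 1 / (((n : ℝ) + 2) * ((n : ℝ) + 1))) := by
  set f : ℕ → ℝ := fun n => 1 - 1 / (((n : ℝ) + 2) * ((n : ℝ) + 1)) with hf
  have hmul : Multipliable fun n => f (n + 1) :=
    multipliable_one_sub_of_summable
      (summable_one_div_add_two_mul_add_one.comp_injective (add_left_injective 1))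
  have hf0 : f 0 = 1 / 2 := by norm_num [hf]
  have hf_succ :
      (fun n => f (n + 1)) = fun n : ℕ => 1 - 1 / (((n : ℝ) + 2) * ((n : ℝ) + 3)) := by
    funext n
    simp only [hf, Nat.cast_succ]
    ring
  rw [tprod_eq_zero_mul' hmul, hf0, hf_succ]
  ring

/-- `∏_{n ≥ 2} (1 - 1/(n(n+1))) = -2 sin(πφ)/π`, and it equals twice
`∏_{n ≥ 2} (1 - 1/(n(n-1)))`. -/
theorem quadratic_class_host_product :
    ∏' n : ℕ, (1 - 1 / (((n : ℝ) + 2) * ((n : ℝ) + 3))) =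
      -2 * Real.sin (π * ((1 + Real.sqrt 5) / 2)) / π ∧
    ∏' n : ℕ, (1 - 1 / (((n : ℝ) + 2) * ((n : ℝ) + 3))) =
      2 * ∏' n : ℕ, (1 - 1 / (((n : ℝ) + 2) * ((n : ℝ) + 1))) := by
  refine ⟨?_, tprod_one_sub_one_div_add_two_mul_add_three⟩
  rw [tprod_one_sub_one_div_add_two_mul_add_three,
    tprod_one_sub_one_div_add_two_mul_add_one goldenRatio_sq]
  ring
end

section
/- The infinite product over integers n ≥ 4 of (1 - (3n-1)/(n-1)^3) equals 2/9. -/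
/-!
Since `(n - 1)^3 - (3n - 1) = n^2 (n - 3)`, the factor at `n` is `n^2 (n - 3) / (n - 1)^3`, and the
partial products telescope: `∏_{n=4}^{N} = (2/9) · N/(N-2) · N/(N-1) → 2/9`. All factors lie in
`[0, 1]`, so the finite products form an antitone net over finsets, and the limit along initial
segments is already the unconditional product.
-/

open Filter Topology Finset

theorem hasProd_of_tendsto_prod_range_of_le_one {R : Type*} [CommSemiring R] [LinearOrder R]
    [IsOrderedRing R] [TopologicalSpace R] [OrderTopology R] {f : ℕ → R} {a : R}
    (hf₀ : ∀ i, 0 ≤ f i) (hf₁ : ∀ i, f i ≤ 1)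
    (h : Tendsto (fun n ↦ ∏ i ∈ range n, f i) atTop (𝓝 a)) : HasProd f a := by
  have hanti := prod_anti_set_of_le_one hf₀ hf₁
  have hglb : IsGLB (Set.range fun n ↦ ∏ i ∈ range n, f i) a :=
    isGLB_of_tendsto_atTop (hanti.comp_monotone range_mono) h
  refine tendsto_atTop_isGLB hanti ⟨?_, fun b hb ↦ hglb.2 ?_⟩
  · rintro _ ⟨s, rfl⟩
    obtain ⟨n, hn⟩ := s.exists_nat_subset_range
    exact (hglb.1 ⟨n, rfl⟩).trans (hanti hn)
  · rintro _ ⟨n, rfl⟩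
    exact hb ⟨range n, rfl⟩

theorem one_sub_div_sub_one_pow_three {K : Type*} [Field K] (x : K) (hx : x ≠ 1) :
    1 - (3 * x - 1) / (x - 1) ^ 3 = x ^ 2 * (x - 3) / (x - 1) ^ 3 := by
  have : x - 1 ≠ 0 := sub_ne_zero.mpr hx
  field_simp
  ring

theorem one_sub_div_sub_one_pow_three_mem_Icc {K : Type*} [Field K] [LinearOrder K]
    [IsStrictOrderedRing K] {x : K} (hx : 3 ≤ x) :
    1 - (3 * x - 1) / (x - 1) ^ 3 ∈ Set.Icc 0 1 := by
  have hx₁ : 0 < x - 1 := by linarith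
  refine ⟨?_, sub_le_self _ (div_nonneg (by linarith) (by positivity))⟩
  rw [one_sub_div_sub_one_pow_three x (by linarith)]
  exact div_nonneg (mul_nonneg (sq_nonneg x) (by linarith)) (by positivity)

theorem prod_range_one_sub_div_sub_one_pow_three (k : ℕ) :
    ∏ m ∈ range k, (1 - (3 * ((m : ℝ) + 4) - 1) / (((m : ℝ) + 4) - 1) ^ 3)
      = 2 / 9 * (((k : ℝ) + 3) / ((k : ℝ) + 1)) * (((k : ℝ) + 3) / ((k : ℝ) + 2)) := by
  induction k with
  | zero => norm_num
  | succ k ih =>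
    rw [prod_range_succ, ih, one_sub_div_sub_one_pow_three _ (by norm_cast; omega),
      show (k : ℝ) + 4 - 1 = k + 3 by ring]
    push_cast
    field_simp
    ring

theorem tendsto_prod_range_one_sub_div_sub_one_pow_three :
    Tendsto (fun k : ℕ ↦ ∏ m ∈ range k, (1 - (3 * ((m : ℝ) + 4) - 1) / (((m : ℝ) + 4) - 1) ^ 3))
      atTop (𝓝 (2 / 9)) := by
  simp only [prod_range_one_sub_div_sub_one_pow_three]
  have h₁ := tendsto_add_mul_div_add_mul_atTop_nhds (3 : ℝ) 1 1 one_ne_zero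
  have h₂ := tendsto_add_mul_div_add_mul_atTop_nhds (3 : ℝ) 2 1 one_ne_zero
  simp only [one_mul, div_one] at h₁ h₂
  simpa [add_comm] using (h₁.const_mul (2 / 9)).mul h₂

/-- `∏_{n ≥ 4} (1 - (3n-1)/(n-1)^3) = 2/9`. -/
theorem hardy_littlewood_three :
    ∏' m : ℕ, (1 - (3 * ((m : ℝ) + 4) - 1) / (((m : ℝ) + 4) - 1) ^ 3) = 2 / 9 := by
  have hmem (m : ℕ) : 1 - (3 * ((m : ℝ) + 4) - 1) / (((m : ℝ) + 4) - 1) ^ 3 ∈ Set.Icc 0 1 :=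
    one_sub_div_sub_one_pow_three_mem_Icc (by linarith [m.cast_nonneg (α := ℝ)])
  exact (hasProd_of_tendsto_prod_range_of_le_one (fun m ↦ (hmem m).1) (fun m ↦ (hmem m).2)
    tendsto_prod_range_one_sub_div_sub_one_pow_three).tprod_eq
end
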